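/- arXiv:2109.01260 — 2 statements merged into one kernel-verified Lean document; each statement's English description precedes it below -/
import Mathlib

section
/- Let Ω ⊂ X be open and suppose there exists a Borel regular outer measure μ̃ ≥ μ on X that is doubling within Ω. Then μ (restricted to Ω) is a Vitali measure in the metric space (Ω, d). -/
open Set Metric MeasureTheory Filter ENNReal NNReal TopologicalSpace

noncomputable section

/-- A rectifiable curve parametrized by arc length: a `1`-Lipschitz map
`γ : [0, len] → X` such that the length (variation) of `γ` on `[0, t]` equals `t`. -/
structure Curve (X : Type*) [MetricSpace X] where
  len : ℝ
  len_nonneg : 0 ≤ len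
  toFun : ℝ → X
  lipschitz : LipschitzOnWith 1 toFun (Set.Icc 0 len)
  arclength : ∀ t ∈ Set.Icc (0 : ℝ) len,
    eVariationOn toFun (Set.Icc 0 t) = ENNReal.ofReal t

/-- The curve `γ` lies in the set `A`. -/
def Curve.In {X : Type*} [MetricSpace X] (γ : Curve X) (A : Set X) : Prop :=
  ∀ t ∈ Set.Icc (0 : ℝ) γ.len, γ.toFun t ∈ A

/-- The image of a curve. -/
def Curve.image {X : Type*} [MetricSpace X] (γ : Curve X) : Set X :=
  γ.toFun '' Set.Icc (0 : ℝ) γ.len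

/-- The curve integral `∫_γ ρ ds := ∫_0^{ℓ_γ} ρ(γ(s)) ds`. -/
def curveIntegralENN {X : Type*} [MetricSpace X] (ρ : X → ℝ≥0∞) (γ : Curve X) : ℝ≥0∞ :=
  ∫⁻ s in Set.Icc (0 : ℝ) γ.len, ρ (γ.toFun s)

/-- The `p`-modulus of a family of curves. -/
def pModulus {X : Type*} [MetricSpace X] [MeasurableSpace X] (p : ℝ) (μ : Measure X)
    (Γ : Set (Curve X)) : ℝ≥0∞ :=
  ⨅ (ρ : X → ℝ≥0∞) (_ : Measurable ρ) (_ : ∀ γ ∈ Γ, 1 ≤ curveIntegralENN ρ γ),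
    ∫⁻ x, ρ x ^ p ∂μ

/-- `g` is an upper gradient of `f` in `Ω`. -/
def IsUpperGradientOn {X Y : Type*} [MetricSpace X] [MetricSpace Y]
    (f : X → Y) (g : X → ℝ≥0∞) (Ω : Set X) : Prop :=
  ∀ γ : Curve X, γ.In Ω →
    edist (f (γ.toFun 0)) (f (γ.toFun γ.len)) ≤ curveIntegralENN g γ

/-- `g` is a `p`-weak upper gradient of `f` in `Ω`: the upper gradient inequality
holds for `p`-a.e. curve in `Ω`. -/
def IsWeakUpperGradientOn {X Y : Type*} [MetricSpace X] [MeasurableSpace X] [MetricSpace Y]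
    (p : ℝ) (μ : Measure X) (f : X → Y) (g : X → ℝ≥0∞) (Ω : Set X) : Prop :=
  pModulus p μ {γ : Curve X | γ.In Ω ∧
    ¬ edist (f (γ.toFun 0)) (f (γ.toFun γ.len)) ≤ curveIntegralENN g γ} = 0

/-- `f` belongs to the Dirichlet class `D^p(Ω; Y)`: it has an upper gradient in `L^p(Ω, μ)`. -/
def MemDirichlet {X Y : Type*} [MetricSpace X] [MeasurableSpace X] [MetricSpace Y]
    (p : ℝ) (μ : Measure X) (f : X → Y) (Ω : Set X) : Prop :=
  ∃ g : X → ℝ≥0∞, Measurable g ∧ IsUpperGradientOn f g Ω ∧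
    ∫⁻ x in Ω, g x ^ p ∂μ < ⊤

/-- `μt` is doubling with constant `Cd` within the open set `W`. -/
def DoublingWithinC {X : Type*} [MetricSpace X] [MeasurableSpace X]
    (μt : Measure X) (Cd : ℝ≥0) (W : Set X) : Prop :=
  ∀ (x : X) (r : ℝ), 0 < r → Metric.ball x r ⊆ W →
    0 < μt (Metric.ball x (2 * r)) ∧
      μt (Metric.ball x (2 * r)) ≤ Cd * μt (Metric.ball x r) ∧
      μt (Metric.ball x (2 * r)) < ⊤

/-- `μt` is doubling (with some constant) within the open set `W`. -/
def DoublingWithin {X : Type*} [MetricSpace X] [MeasurableSpace X]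
    (μt : Measure X) (W : Set X) : Prop :=
  ∃ Cd : ℝ≥0, DoublingWithinC μt Cd W

/-- `L_f(x,r) = sup { d_Y(f(y), f(x)) : y ∈ Ω, d(y,x) ≤ r }`. -/
def eL {X Y : Type*} [MetricSpace X] [MetricSpace Y]
    (f : X → Y) (Ω : Set X) (x : X) (r : ℝ) : ℝ≥0∞ :=
  ⨆ (y : X) (_ : y ∈ Ω) (_ : dist y x ≤ r), edist (f y) (f x)

/-- `l_f(x,r) = inf { d_Y(f(y), f(x)) : y ∈ Ω, d(y,x) ≥ r }`. -/
def el {X Y : Type*} [MetricSpace X] [MetricSpace Y]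
    (f : X → Y) (Ω : Set X) (x : X) (r : ℝ) : ℝ≥0∞ :=
  ⨅ (y : X) (_ : y ∈ Ω) (_ : r ≤ dist y x), edist (f y) (f x)

/-- `H_f(x,r) = L_f(x,r)/l_f(x,r)`, interpreted as `∞` when the denominator is zero. -/
def eH {X Y : Type*} [MetricSpace X] [MetricSpace Y]
    (f : X → Y) (Ω : Set X) (x : X) (r : ℝ) : ℝ≥0∞ :=
  if el f Ω x r = 0 then ⊤ else eL f Ω x r / el f Ω x r

/-- `h_f(x) = liminf_{r → 0} H_f(x,r)`. -/
def hDil {X Y : Type*} [MetricSpace X] [MetricSpace Y]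
    (f : X → Y) (Ω : Set X) (x : X) : ℝ≥0∞ :=
  Filter.liminf (fun r : ℝ => eH f Ω x r) (nhdsWithin 0 (Set.Ioi 0))

/-- `lip_f(x) = liminf_{r → 0} sup_{y ∈ B(x,r)} d_Y(f(y), f(x)) / r` (within `Ω`). -/
def elip {X Y : Type*} [MetricSpace X] [MetricSpace Y]
    (f : X → Y) (Ω : Set X) (x : X) : ℝ≥0∞ :=
  Filter.liminf
    (fun r : ℝ =>
      (⨆ (y : X) (_ : y ∈ Ω ∩ Metric.ball x r), edist (f y) (f x)) / ENNReal.ofReal r)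
    (nhdsWithin 0 (Set.Ioi 0))

/-- `f` is a homeomorphism from `Ω` onto `f(Ω)`. -/
def IsHomeoOn {X Y : Type*} [TopologicalSpace X] [TopologicalSpace Y]
    (f : X → Y) (Ω : Set X) : Prop :=
  ContinuousOn f Ω ∧ ∃ g : Y → X, ContinuousOn g (f '' Ω) ∧ ∀ x ∈ Ω, g (f x) = x

/-- The restricted codimension-`p` Hausdorff content with respect to `μt`. -/
def codimHContent {X : Type*} [MetricSpace X] [MeasurableSpace X]
    (μt : Measure X) (p R : ℝ) (A : Set X) : ℝ≥0∞ :=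
  ⨅ (I : Set (X × ℝ)) (_ : I.Countable) (_ : ∀ b ∈ I, 0 < b.2 ∧ b.2 ≤ R)
    (_ : A ⊆ ⋃ b ∈ I, Metric.ball b.1 b.2),
    ∑' b : I, μt (Metric.ball b.1.1 b.1.2) / ENNReal.ofReal (b.1.2 ^ p)

/-- The codimension-`p` Hausdorff measure with respect to `μt`. -/
def codimH {X : Type*} [MetricSpace X] [MeasurableSpace X]
    (μt : Measure X) (p : ℝ) (A : Set X) : ℝ≥0∞ :=
  ⨆ (R : ℝ) (_ : 0 < R), codimHContent μt p R A

/-- `E` has σ-finite codimension-`p` Hausdorff measure with respect to `μt`. -/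
def SigmaFiniteCodimH {X : Type*} [MetricSpace X] [MeasurableSpace X]
    (μt : Measure X) (p : ℝ) (E : Set X) : Prop :=
  ∃ Ek : ℕ → Set X, E ⊆ ⋃ k, Ek k ∧ ∀ k, codimH μt p (Ek k) < ⊤

/-- `μ₀` is a Vitali measure: every fine covering (by closed balls, recorded as
center–radius pairs of positive radius) of any set `A` admits a pairwise disjoint
subcollection covering `μ₀`-almost all of `A`. -/
def IsVitaliMeasure {Z : Type*} [MetricSpace Z] [MeasurableSpace Z] (μ₀ : Measure Z) : Prop :=
  ∀ (A : Set Z) (F : Set (Z × ℝ)), (∀ b ∈ F, 0 < b.2) →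
    (∀ x ∈ A, ∀ ε : ℝ, 0 < ε → ∃ r : ℝ, 0 < r ∧ r < ε ∧ (x, r) ∈ F) →
    ∃ G ⊆ F, (G.PairwiseDisjoint fun b => Metric.closedBall b.1 b.2) ∧
      μ₀ (A \ ⋃ b ∈ G, Metric.closedBall b.1 b.2) = 0

/-- Ahlfors `Q`-regularity. -/
def AhlforsRegular {Z : Type*} [MetricSpace Z] [MeasurableSpace Z]
    (μ : Measure Z) (Q : ℝ) : Prop :=
  ∃ C : ℝ≥0, 1 ≤ C ∧ ∀ (x : Z) (r : ℝ), 0 < r →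
    ENNReal.ofReal r < EMetric.diam (Set.univ : Set Z) →
    ENNReal.ofReal (r ^ Q) / C ≤ μ (Metric.ball x r) ∧
      μ (Metric.ball x r) ≤ C * ENNReal.ofReal (r ^ Q)

/-- The set `A` is metric doubling with constant `M`: each ball in `A` of radius `r`
can be covered by `M` balls in `A` of radius `r/2`. -/
def MetricDoublingWith {X : Type*} [MetricSpace X] (A : Set X) (M : ℕ) : Prop :=
  ∀ x ∈ A, ∀ r : ℝ, 0 < r → ∃ T : Finset X, ↑T ⊆ A ∧ T.card ≤ M ∧
    A ∩ Metric.ball x r ⊆ ⋃ y ∈ T, Metric.ball y (r / 2)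

end
/-- Lemma 4.4: if `μ ≤ μ̃` with `μ̃` doubling within the open set `Ω`, then `μ`
restricted to `Ω` is a Vitali measure in the metric space `(Ω, d)`. -/
theorem mu_is_vitali_on_subspace
    {X : Type*} [MetricSpace X] [MeasurableSpace X] [BorelSpace X]
    [ConnectedSpace X] [Nontrivial X] [TopologicalSpace.SeparableSpace X]
    (μ : Measure X) (hμball : ∀ (x : X) (r : ℝ), μ (Metric.ball x r) < ⊤)
    (Ω : Set X) (hΩopen : IsOpen Ω)
    (μt : Measure X) (hle : ∀ S : Set X, μ S ≤ μt S)
    (hdbl : DoublingWithin μt Ω) :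
    IsVitaliMeasure (Measure.comap (Subtype.val : Ω → X) μ) := by
  classical
  obtain ⟨Cd, hCd⟩ := hdbl
  have hΩm : MeasurableSet Ω := hΩopen.measurableSet
  have hemb : MeasurableEmbedding (Subtype.val : Ω → X) :=
    MeasurableEmbedding.subtype_coe hΩm
  intro A F hFpos hFfine
  -- restrict to pairs whose 4-fold ball lies in Ω
  set F' : Set (Ω × ℝ) := {b ∈ F | Metric.ball (b.1 : X) (4 * b.2) ⊆ Ω} with hF'
  set μt' : Measure Ω := Measure.comap (Subtype.val : Ω → X) μt with hμt'
  have hcomap : ∀ S : Set Ω, μt' S = μt (Subtype.val '' S) := fun S =>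
    hemb.comap_apply μt S
  have hcomapμ : ∀ S : Set Ω, Measure.comap (Subtype.val : Ω → X) μ S
      = μ (Subtype.val '' S) := fun S => hemb.comap_apply μ S
  -- images of subtype balls
  have himg_cb : ∀ (x : Ω) (r : ℝ),
      Subtype.val '' (Metric.closedBall x r) = Ω ∩ Metric.closedBall (x : X) r := by
    intro x r
    ext y
    constructor
    · rintro ⟨z, hz, rfl⟩
      exact ⟨z.2, by simpa [Metric.mem_closedBall, Subtype.dist_eq] using hz⟩
    · rintro ⟨hy, hyd⟩
      exact ⟨⟨y, hy⟩, by simpa [Metric.mem_closedBall, Subtype.dist_eq] using hyd, rfl⟩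
  haveI : IsLocallyFiniteMeasure μt' := by
    constructor
    intro x
    obtain ⟨r, hr0, hrΩ⟩ := Metric.isOpen_iff.1 hΩopen (x : X) x.2
    refine ⟨Metric.ball x r, Metric.ball_mem_nhds x hr0, ?_⟩
    have h1 := hCd (x : X) r hr0 hrΩ
    have hle2 : μt' (Metric.ball x r) ≤ μt (Metric.ball (x : X) (2 * r)) := by
      rw [hcomap]
      refine measure_mono ?_
      rintro y ⟨z, hz, rfl⟩
      have : dist (z : X) (x : X) < r := by
        simpa [Metric.mem_ball, Subtype.dist_eq] using hz
      exact Metric.mem_ball.2 (lt_of_lt_of_le this (by linarith))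
    exact lt_of_le_of_lt hle2 h1.2.2
  -- the doubling-type estimate for the restricted family
  have key : ∀ b ∈ F', μt' (Metric.closedBall b.1 (3 * b.2))
      ≤ (Cd ^ 2 : ℝ≥0) * μt' (Metric.closedBall b.1 b.2) := by
    rintro ⟨x, r⟩ ⟨hbF, hbΩ⟩
    have hr0 : 0 < r := hFpos _ hbF
    have hball1 : Metric.ball (x : X) r ⊆ Ω := fun y hy =>
      hbΩ (Metric.mem_ball.2 (lt_of_lt_of_le (Metric.mem_ball.1 hy) (by linarith)))
    have hball2 : Metric.ball (x : X) (2 * r) ⊆ Ω := fun y hy =>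
      hbΩ (Metric.mem_ball.2 (lt_of_lt_of_le (Metric.mem_ball.1 hy) (by linarith)))
    have h1 := hCd (x : X) r hr0 hball1
    have h2 := hCd (x : X) (2 * r) (by linarith) hball2
    have h4eq : (2 : ℝ) * (2 * r) = 4 * r := by ring
    have hLHS : μt' (Metric.closedBall (x : Ω) (3 * r))
        ≤ μt (Metric.ball (x : X) (4 * r)) := by
      rw [hcomap, himg_cb]
      refine measure_mono ?_
      rintro y ⟨-, hy⟩
      exact Metric.mem_ball.2 (lt_of_le_of_lt (Metric.mem_closedBall.1 hy) (by linarith))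
    have hRHS : μt (Metric.ball (x : X) r) ≤ μt' (Metric.closedBall (x : Ω) r) := by
      rw [hcomap, himg_cb]
      refine measure_mono fun y hy => ⟨hball1 hy, Metric.ball_subset_closedBall hy⟩
    calc μt' (Metric.closedBall (x : Ω) (3 * r))
        ≤ μt (Metric.ball (x : X) (4 * r)) := hLHS
      _ = μt (Metric.ball (x : X) (2 * (2 * r))) := by rw [h4eq]
      _ ≤ Cd * μt (Metric.ball (x : X) (2 * r)) := h2.2.1
      _ ≤ Cd * (Cd * μt (Metric.ball (x : X) r)) := by
          exact mul_le_mul_right h1.2.1 _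
      _ = (Cd ^ 2 : ℝ≥0) * μt (Metric.ball (x : X) r) := by
          rw [← mul_assoc]
          congr 1
          simp [pow_two, ENNReal.coe_mul]
      _ ≤ (Cd ^ 2 : ℝ≥0) * μt' (Metric.closedBall (x : Ω) r) :=
          mul_le_mul_right hRHS _
  -- fineness of the restricted family
  have hfine' : ∀ x ∈ A, ∀ ε > (0 : ℝ), ∃ b ∈ F', b.2 ≤ ε ∧ b.1 = x := by
    intro x hx ε hε
    obtain ⟨δ, hδ0, hδΩ⟩ := Metric.isOpen_iff.1 hΩopen (x : X) x.2
    obtain ⟨r, hr0, hrlt, hrF⟩ := hFfine x hx (min ε (δ / 4))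
      (lt_min hε (by linarith))
    refine ⟨(x, r), ⟨hrF, ?_⟩, le_of_lt (lt_of_lt_of_le hrlt (min_le_left _ _)), rfl⟩
    have : 4 * r < δ := by
      have := lt_of_lt_of_le hrlt (min_le_right _ _)
      linarith
    exact fun y hy => hδΩ (Metric.mem_ball.2 (lt_trans (Metric.mem_ball.1 hy) this))
  -- apply the measurable Vitali covering theorem in the subspace Ω
  haveI : SecondCountableTopology X := UniformSpace.secondCountable_of_separable X
  obtain ⟨u, huF', hucount, hudisj, hucov⟩ :=
    Vitali.exists_disjoint_covering_ae (μ := μt') A F' (Cd ^ 2)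
      (fun b => b.2) (fun b => b.1) (fun b => Metric.closedBall b.1 b.2)
      (fun b _ => subset_rfl) key
      (fun b hb => ⟨b.1, Metric.ball_subset_interior_closedBall
        (Metric.mem_ball_self (hFpos _ hb.1))⟩)
      (fun b _ => Metric.isClosed_closedBall) hfine'
  refine ⟨u, fun b hb => (huF' hb).1, hudisj, ?_⟩
  have hle' : Measure.comap (Subtype.val : Ω → X) μ
      (A \ ⋃ b ∈ u, Metric.closedBall b.1 b.2) ≤
      μt' (A \ ⋃ b ∈ u, Metric.closedBall b.1 b.2) := by
    rw [hcomapμ, hcomap]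
    exact hle _
  exact le_antisymm (hucov ▸ hle') zero_le
end

section
/- Let −∞ < a < b < ∞ and let h: [a,b] → Y be a continuous mapping such that lip_h(t) < ∞ for all t ∈ A, where A ⊂ [a,b] is a Lebesgue measurable set. Then ℋ¹(h(A)) ≤ ∫_A lip_h(t) dt. -/
open Set Metric MeasureTheory Filter ENNReal NNReal TopologicalSpace

private theorem lip_core_estimate {Y : Type*} [MetricSpace Y] [MeasurableSpace Y] [BorelSpace Y]
    (a b : ℝ) (h : ℝ → Y) (c : ℝ≥0∞) (hc : c ≠ ⊤) (S : Set ℝ)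
    (hS : S ⊆ Set.Icc a b) (hg : ∀ t ∈ S, elip h (Set.Icc a b) t < c) :
    μH[1] (h '' S) ≤ c * volume S := by
  rcases eq_or_ne (volume S) ∞ with hV | hV
  · rcases S.eq_empty_or_nonempty with rfl | ⟨t0, ht0⟩
    · simp
    · have hc0 : c ≠ 0 := by
        intro h0
        simpa [h0] using hg t0 ht0
      rw [hV, ENNReal.mul_top hc0]
      exact le_top
  have key : ∀ η : ℝ, 0 < η → ∀ ε : ℝ≥0∞, ε ≠ 0 →
      μH[1] (h '' S) ≤ c * ENNReal.ofReal (1 + η) * (volume S + ε) := by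
    intro η hη ε hε
    have h1η : (0:ℝ) < 1 + η := by linarith
    -- pointwise radii
    have point : ∀ t ∈ S, ∀ δ : ℝ, 0 < δ → ∃ ρ : ℝ, 0 < ρ ∧ ρ < δ ∧
        ∀ y ∈ Set.Icc a b ∩ Metric.closedBall t ρ,
          edist (h y) (h t) ≤ c * ENNReal.ofReal ((1 + η) * ρ) := by
      intro t ht δ hδ
      have hfr : ∃ᶠ r in nhdsWithin (0:ℝ) (Set.Ioi 0),
          (⨆ (y : ℝ) (_ : y ∈ Set.Icc a b ∩ Metric.ball t r), edist (h y) (h t))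
            / ENNReal.ofReal r < c :=
        frequently_lt_of_liminf_lt (by isBoundedDefault) (hg t ht)
      have hIoo : Set.Ioo (0:ℝ) δ ∈ nhdsWithin (0:ℝ) (Set.Ioi 0) :=
        Ioo_mem_nhdsGT_of_mem ⟨le_refl 0, hδ⟩
      obtain ⟨r, hrlt, hrmem⟩ := (hfr.and_eventually (eventually_of_mem hIoo fun x hx => hx)).exists
      have hρr : r / (1 + η) < r := div_lt_self hrmem.1 (by linarith)
      have hρpos : 0 < r / (1 + η) := div_pos hrmem.1 h1η
      refine ⟨r / (1 + η), hρpos, hρr.trans hrmem.2, ?_⟩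
      intro y hy
      have hrr : (1 + η) * (r / (1 + η)) = r := by field_simp
      rw [hrr]
      have hball : y ∈ Set.Icc a b ∩ Metric.ball t r :=
        ⟨hy.1, Metric.mem_ball.2 (lt_of_le_of_lt hy.2 hρr)⟩
      have hle : edist (h y) (h t) ≤
          ⨆ (z : ℝ) (_ : z ∈ Set.Icc a b ∩ Metric.ball t r), edist (h z) (h t) :=
        le_iSup₂ (f := fun z (_ : z ∈ Set.Icc a b ∩ Metric.ball t r) => edist (h z) (h t)) y hball
      refine hle.trans ?_
      exact ((ENNReal.div_lt_iff (Or.inl (by simp [hrmem.1])) (Or.inl ENNReal.ofReal_ne_top)).1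
        hrlt).le
    -- Besicovitch coverings at all scales
    have cover : ∀ n : ℕ, ∃ (T : Set ℝ) (rad : ℝ → ℝ), T.Countable ∧ T ⊆ S ∧
        (∀ x ∈ T, 0 < rad x ∧ rad x ≤ 1 / (n + 1) ∧
          ∀ y ∈ Set.Icc a b ∩ Metric.closedBall x (rad x),
            edist (h y) (h x) ≤ c * ENNReal.ofReal ((1 + η) * rad x)) ∧
        (S ⊆ ⋃ x ∈ T, Metric.closedBall x (rad x)) ∧
        (∑' x : T, volume (Metric.closedBall (x : ℝ) (rad x))) ≤ volume S + ε := by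
      intro n
      have hf : ∀ x ∈ S, ∀ δ > 0,
          ({ρ : ℝ | 0 < ρ ∧ ρ ≤ 1 / (n + 1) ∧
            ∀ y ∈ Set.Icc a b ∩ Metric.closedBall x ρ,
              edist (h y) (h x) ≤ c * ENNReal.ofReal ((1 + η) * ρ)} ∩ Set.Ioo 0 δ).Nonempty := by
        intro x hx δ hδ
        have hmin : (0:ℝ) < min δ (1 / (n + 1)) := lt_min hδ (by positivity)
        obtain ⟨ρ, hρ0, hρlt, hρprop⟩ := point x hx _ hmin
        exact ⟨ρ, ⟨hρ0, (hρlt.le.trans (min_le_right _ _)), hρprop⟩,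
          hρ0, hρlt.trans_le (min_le_left _ _)⟩
      obtain ⟨T, rad, hTc, hTS, hrad, hcov, hsum⟩ :=
        Besicovitch.exists_closedBall_covering_tsum_measure_le volume hε _ S hf
      exact ⟨T, rad, hTc, hTS, fun x hx => (hrad x hx : _), hcov, hsum⟩
    choose T rad Tct Tsub radp Scov sumle using cover
    haveI : ∀ n, Countable (T n) := fun n => (Tct n).to_subtype
    set u : ∀ n : ℕ, (T n) → Set Y :=
      fun n x => h '' (S ∩ Metric.closedBall (x : ℝ) (rad n x)) with hu
    have hdiam : ∀ n (x : T n),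
        EMetric.diam (u n x) ≤ c * ENNReal.ofReal (1 + η) * volume (Metric.closedBall (x:ℝ) (rad n x)) := by
      intro n x
      obtain ⟨hpos, hsmall, himg⟩ := radp n x x.2
      have hsub : u n x ⊆ EMetric.closedBall (h (x:ℝ)) (c * ENNReal.ofReal ((1 + η) * rad n x)) := by
        rintro _ ⟨y, ⟨hyS, hyB⟩, rfl⟩
        exact himg y ⟨hS hyS, hyB⟩
      calc EMetric.diam (u n x) ≤ EMetric.diam
            (EMetric.closedBall (h (x:ℝ)) (c * ENNReal.ofReal ((1 + η) * rad n x))) :=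
            EMetric.diam_mono hsub
        _ ≤ 2 * (c * ENNReal.ofReal ((1 + η) * rad n x)) := EMetric.diam_closedBall
        _ = c * ENNReal.ofReal (1 + η) * ENNReal.ofReal (2 * rad n x) := by
            rw [ENNReal.ofReal_mul h1η.le, ENNReal.ofReal_mul (by norm_num : (0:ℝ) ≤ 2)]
            rw [ENNReal.ofReal_ofNat]
            ring
        _ = c * ENNReal.ofReal (1 + η) * volume (Metric.closedBall (x:ℝ) (rad n x)) := by
            rw [Real.volume_closedBall]
    have hdiam' : ∀ n (x : T n),
        EMetric.diam (u n x) ≤ 2 * c * ENNReal.ofReal ((1 + η) * (1 / (n + 1))) := by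
      intro n x
      obtain ⟨hpos, hsmall, himg⟩ := radp n x x.2
      refine (hdiam n x).trans ?_
      rw [Real.volume_closedBall]
      calc c * ENNReal.ofReal (1 + η) * ENNReal.ofReal (2 * rad n x)
          ≤ c * ENNReal.ofReal (1 + η) * ENNReal.ofReal (2 * (1 / (n + 1))) := by
            have h2 : 2 * rad n x ≤ 2 * (1 / (n + 1) : ℝ) := by linarith
            exact mul_le_mul_right (ENNReal.ofReal_le_ofReal h2) _
        _ = 2 * c * ENNReal.ofReal ((1 + η) * (1 / (n + 1))) := by
            rw [ENNReal.ofReal_mul (by norm_num : (0:ℝ) ≤ 2), ENNReal.ofReal_mul h1η.le,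
              ENNReal.ofReal_ofNat]
            ring
    have hrtends : Tendsto (fun n : ℕ => 2 * c * ENNReal.ofReal ((1 + η) * (1 / (n + 1)))) atTop
        (nhds 0) := by
      have h0 : Tendsto (fun n : ℕ => (1 + η) * (1 / ((n:ℝ) + 1))) atTop (nhds 0) := by
        have := tendsto_one_div_add_atTop_nhds_zero_nat (𝕜 := ℝ)
        simpa using this.const_mul (1 + η)
      have h1 : Tendsto (fun n : ℕ => ENNReal.ofReal ((1 + η) * (1 / (n + 1)))) atTop
          (nhds 0) := by
        rw [← ENNReal.ofReal_zero]
        exact (ENNReal.continuous_ofReal.tendsto 0).comp h0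
      have := ENNReal.Tendsto.const_mul h1 (Or.inr (ENNReal.mul_ne_top (ENNReal.ofNat_ne_top (n := 2)) hc))
      simpa using this
    have hcovimg : ∀ n : ℕ, h '' S ⊆ ⋃ x : T n, u n x := by
      intro n
      rintro _ ⟨t, ht, rfl⟩
      obtain ⟨x, hxT, hxB⟩ := by
        simpa using Scov n ht
      exact Set.mem_iUnion.2 ⟨⟨x, hxT⟩, Set.mem_image_of_mem h ⟨ht, hxB⟩⟩
    have hsumle : ∀ n : ℕ, (∑' x : T n, EMetric.diam (u n x) ^ (1:ℝ)) ≤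
        c * ENNReal.ofReal (1 + η) * (volume S + ε) := by
      intro n
      calc (∑' x : T n, EMetric.diam (u n x) ^ (1:ℝ))
          = ∑' x : T n, EMetric.diam (u n x) := by simp
        _ ≤ ∑' x : T n, c * ENNReal.ofReal (1 + η) *
              volume (Metric.closedBall (x:ℝ) (rad n x)) :=
            ENNReal.tsum_le_tsum fun x => hdiam n x
        _ = c * ENNReal.ofReal (1 + η) *
              ∑' x : T n, volume (Metric.closedBall (x:ℝ) (rad n x)) := ENNReal.tsum_mul_left
        _ ≤ c * ENNReal.ofReal (1 + η) * (volume S + ε) := by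
            gcongr
            exact sumle n
    have hH := MeasureTheory.Measure.hausdorffMeasure_le_liminf_tsum 1 (h '' S)
      (fun n : ℕ => 2 * c * ENNReal.ofReal ((1 + η) * (1 / (n + 1)))) hrtends u
      (Filter.Eventually.of_forall fun n => hdiam' n) (Filter.Eventually.of_forall hcovimg)
    refine hH.trans ?_
    exact liminf_le_of_frequently_le' (Filter.Frequently.of_forall hsumle)
  -- pass to the limit
  have hlim : Tendsto (fun n : ℕ =>
      c * ENNReal.ofReal (1 + 1 / (n + 1)) * (volume S + ENNReal.ofReal (1 / (n + 1)))) atTop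
      (nhds (c * volume S)) := by
    have h1 : Tendsto (fun n : ℕ => ENNReal.ofReal (1 + 1 / ((n:ℝ) + 1))) atTop (nhds 1) := by
      have h0 : Tendsto (fun n : ℕ => 1 + 1 / ((n:ℝ) + 1)) atTop (nhds 1) := by
        have := tendsto_one_div_add_atTop_nhds_zero_nat (𝕜 := ℝ)
        simpa using this.const_add 1
      have := (ENNReal.continuous_ofReal.tendsto 1).comp h0
      simpa [Function.comp_def] using this
    have h2 : Tendsto (fun n : ℕ => c * ENNReal.ofReal (1 + 1 / ((n:ℝ) + 1))) atTop
        (nhds c) := by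
      have := ENNReal.Tendsto.const_mul h1 (Or.inr hc)
      simpa using this
    have h3 : Tendsto (fun n : ℕ => volume S + ENNReal.ofReal (1 / ((n:ℝ) + 1))) atTop
        (nhds (volume S)) := by
      have h0 : Tendsto (fun n : ℕ => ENNReal.ofReal (1 / ((n:ℝ) + 1))) atTop (nhds 0) := by
        rw [← ENNReal.ofReal_zero]
        exact (ENNReal.continuous_ofReal.tendsto 0).comp tendsto_one_div_add_atTop_nhds_zero_nat
      simpa using tendsto_const_nhds.add h0
    have := ENNReal.Tendsto.mul h2 (Or.inr hV) h3 (Or.inr hc)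
    simpa using this
  refine ge_of_tendsto hlim ?_
  exact Filter.Eventually.of_forall fun n =>
    key (1 / (n + 1)) (by positivity) (ENNReal.ofReal (1 / (n + 1)))
      (by simp [ENNReal.ofReal_eq_zero]; positivity)

private theorem lip_exists_measurable_version {Y : Type*} [MetricSpace Y]
    (a b : ℝ) (hab : a ≤ b) (h : ℝ → Y) (hcont : ContinuousOn h (Set.Icc a b)) :
    ∃ G : ℝ → ℝ≥0∞, Measurable G ∧ ∀ x ∈ Set.Icc a b, G x = elip h (Set.Icc a b) x := by
  haveI : Nonempty (Set.Icc a b) := ⟨⟨a, le_refl a, hab⟩⟩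
  -- continuous extension of h
  set H : ℝ → Y := fun x => h ((Set.projIcc a b hab x : Set.Icc a b) : ℝ) with hH
  have Hcont : Continuous H :=
    hcont.comp_continuous (continuous_subtype_val.comp (continuous_projIcc))
      fun x => (Set.projIcc a b hab x).2
  have Heq : ∀ x ∈ Set.Icc a b, H x = h x := by
    intro x hx
    simp only [hH, Set.projIcc_of_mem hab hx]
  -- dense sequence in Icc a b
  obtain ⟨u, hu⟩ := TopologicalSpace.exists_dense_seq (Set.Icc a b)
  set D : ℕ → ℝ := fun n => (u n : ℝ) with hD
  have hDmem : ∀ n, D n ∈ Set.Icc a b := fun n => (u n).2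
  -- the sup over the ball equals a countable sup
  set M : ℝ → ℝ → ℝ≥0∞ := fun s x =>
    ⨆ n : ℕ, if dist (D n) x < s then edist (H (D n)) (H x) else 0 with hM
  have hMe : ∀ s : ℝ, ∀ x ∈ Set.Icc a b,
      (⨆ (y : ℝ) (_ : y ∈ Set.Icc a b ∩ Metric.ball x s), edist (h y) (h x)) = M s x := by
    intro s x hx
    apply le_antisymm
    · refine iSup₂_le fun y hy => ?_
      obtain ⟨hyΩ, hyb⟩ := hy
      -- approximate y by the dense sequence
      obtain ⟨v, hvmem, hvlim⟩ := mem_closure_iff_seq_limit.1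
        (by rw [dense_iff_closure_eq.1 hu]; trivial :
          (⟨y, hyΩ⟩ : Set.Icc a b) ∈ closure (Set.range u))
      have hvlim' : Tendsto (fun k => (v k : ℝ)) atTop (nhds y) :=
        (continuous_subtype_val.tendsto _).comp hvlim
      have hdlim : Tendsto (fun k => dist ((v k : ℝ)) x) atTop (nhds (dist y x)) :=
        (Continuous.tendsto (continuous_id.dist continuous_const) y).comp hvlim'
      have hev : ∀ᶠ k in atTop, dist ((v k : ℝ)) x < s :=
        hdlim.eventually_lt_const hyb
      have helim : Tendsto (fun k => edist (H ((v k : ℝ))) (H x)) atTop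
          (nhds (edist (H y) (H x))) :=
        (Continuous.tendsto ((Hcont.edist continuous_const)) y).comp hvlim'
      have hbound : ∀ᶠ k in atTop, edist (H ((v k : ℝ))) (H x) ≤ M s x := by
        filter_upwards [hev] with k hk
        obtain ⟨m, hm⟩ := hvmem k
        have hDm : D m = ((v k : ℝ)) := congrArg Subtype.val hm
        calc edist (H ((v k : ℝ))) (H x)
            = if dist (D m) x < s then edist (H (D m)) (H x) else 0 := by
              rw [hDm, if_pos hk]
          _ ≤ M s x := le_iSup
              (fun n => if dist (D n) x < s then edist (H (D n)) (H x) else 0) m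
      have : edist (H y) (H x) ≤ M s x := le_of_tendsto helim hbound
      rwa [Heq y hyΩ, Heq x hx] at this
    · refine iSup_le fun n => ?_
      split_ifs with hn
      · have hmem : D n ∈ Set.Icc a b ∩ Metric.ball x s := ⟨hDmem n, Metric.mem_ball.2 hn⟩
        rw [Heq (D n) (hDmem n), Heq x hx]
        exact le_iSup₂ (f := fun z (_ : z ∈ Set.Icc a b ∩ Metric.ball x s) =>
          edist (h z) (h x)) (D n) hmem
      · exact zero_le
  have hMmeas : ∀ s : ℝ, Measurable (M s) := by
    intro s
    apply Measurable.iSup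
    intro n
    apply Measurable.ite
    · exact measurableSet_lt (continuous_const.dist continuous_id).measurable measurable_const
    · exact (Continuous.edist continuous_const Hcont).measurable
    · exact measurable_const
  set G : ℝ → ℝ≥0∞ := fun x => ⨆ k : ℕ, ⨅ (q : ℚ) (_ : 0 < (q:ℝ) ∧ (q:ℝ) < 1 / (k + 1)),
    M q x / ENNReal.ofReal q with hG
  refine ⟨G, ?_, ?_⟩
  · apply Measurable.iSup
    intro k
    apply Measurable.iInf
    intro q
    by_cases hq : 0 < (q:ℝ) ∧ (q:ℝ) < 1 / (k + 1)
    · simp only [iInf_pos hq]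
      exact (hMmeas q).div measurable_const
    · simp only [iInf_neg hq]
      exact measurable_const
  · intro x hx
    -- rewrite the liminf using the basis of 𝓝[>] 0
    have hbasis := (nhdsGT_basis_of_exists_gt (⟨1, zero_lt_one⟩ : ∃ r : ℝ, 0 < r))
    rw [elip, hbasis.liminf_eq_iSup_iInf]
    -- notation for the function
    set f : ℝ → ℝ≥0∞ := fun r =>
      (⨆ (y : ℝ) (_ : y ∈ Set.Icc a b ∩ Metric.ball x r), edist (h y) (h x))
        / ENNReal.ofReal r with hf
    have hfM : ∀ r : ℝ, f r = M r x / ENNReal.ofReal r := by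
      intro r; rw [hf]; simp only [hMe r x hx]
    -- monotonicity of the numerator
    have hLmono : ∀ {s s' : ℝ}, s ≤ s' →
        (⨆ (y : ℝ) (_ : y ∈ Set.Icc a b ∩ Metric.ball x s), edist (h y) (h x)) ≤
        (⨆ (y : ℝ) (_ : y ∈ Set.Icc a b ∩ Metric.ball x s'), edist (h y) (h x)) := by
      intro s s' hss
      refine iSup₂_le fun y hy => le_iSup₂ (f := fun z (_ : z ∈ Set.Icc a b ∩ Metric.ball x s') =>
        edist (h z) (h x)) y ⟨hy.1, Metric.ball_subset_ball hss hy.2⟩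
    -- key: inf over an interval = inf over rationals in it
    have hinf : ∀ ε : ℝ, 0 < ε →
        (⨅ r ∈ Set.Ioo (0:ℝ) ε, f r) =
        ⨅ (q : ℚ) (_ : 0 < (q:ℝ) ∧ (q:ℝ) < ε), f q := by
      intro ε hε
      apply le_antisymm
      · exact le_iInf₂ fun q hq => iInf₂_le (q : ℝ) ⟨hq.1, hq.2⟩
      · refine le_iInf₂ fun r hr => ?_
        -- approximate r from below by rationals
        have hq : ∀ k : ℕ, ∃ q : ℚ, r - 1 / (k + 1) < (q:ℝ) ∧ (q:ℝ) < r := by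
          intro k
          exact exists_rat_btwn (by
            have : (0:ℝ) < 1 / (k + 1) := by positivity
            linarith)
        choose q hq1 hq2 using hq
        have hqlim : Tendsto (fun k => ((q k : ℝ))) atTop (nhds r) := by
          have hlow : Tendsto (fun k : ℕ => r - 1 / ((k:ℝ) + 1)) atTop (nhds r) := by
            have := tendsto_one_div_add_atTop_nhds_zero_nat (𝕜 := ℝ)
            simpa using tendsto_const_nhds.sub this
          exact tendsto_of_tendsto_of_tendsto_of_le_of_le hlow tendsto_const_nhds
            (fun k => (hq1 k).le) (fun k => (hq2 k).le)
        have hqpos : ∀ᶠ k in atTop, 0 < ((q k : ℝ)) := hqlim.eventually_const_lt hr.1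
        -- the bound along the sequence
        have hseq : ∀ᶠ k in atTop,
            (⨅ (p : ℚ) (_ : 0 < (p:ℝ) ∧ (p:ℝ) < ε), f p) ≤
            (⨆ (y : ℝ) (_ : y ∈ Set.Icc a b ∩ Metric.ball x r), edist (h y) (h x)) *
              (ENNReal.ofReal (q k))⁻¹ := by
          filter_upwards [hqpos] with k hk
          refine le_trans (iInf₂_le (q k) ⟨hk, (hq2 k).trans hr.2⟩) ?_
          show (⨆ (y : ℝ) (_ : y ∈ Set.Icc a b ∩ Metric.ball x ((q k : ℝ))), edist (h y) (h x))
              / ENNReal.ofReal ((q k : ℝ)) ≤ _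
          rw [div_eq_mul_inv]
          exact mul_le_mul_left (hLmono (hq2 k).le) _
        have htend : Tendsto (fun k =>
            (⨆ (y : ℝ) (_ : y ∈ Set.Icc a b ∩ Metric.ball x r), edist (h y) (h x)) *
              (ENNReal.ofReal (q k))⁻¹) atTop
            (nhds ((⨆ (y : ℝ) (_ : y ∈ Set.Icc a b ∩ Metric.ball x r), edist (h y) (h x)) *
              (ENNReal.ofReal r)⁻¹)) := by
          have h1 : Tendsto (fun k => ENNReal.ofReal ((q k : ℝ))) atTop
              (nhds (ENNReal.ofReal r)) := (ENNReal.continuous_ofReal.tendsto r).comp hqlim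
          have h2 : Tendsto (fun k => (ENNReal.ofReal ((q k : ℝ)))⁻¹) atTop
              (nhds ((ENNReal.ofReal r)⁻¹)) := h1.inv
          exact ENNReal.Tendsto.const_mul h2
            (Or.inl (by simp [ENNReal.inv_ne_zero, ENNReal.ofReal_ne_top]))
        have hfin := ge_of_tendsto htend hseq
        show _ ≤ (⨆ (y : ℝ) (_ : y ∈ Set.Icc a b ∩ Metric.ball x r), edist (h y) (h x))
            / ENNReal.ofReal r
        rw [div_eq_mul_inv]
        exact hfin
    -- replace ε-indexed sup by ℕ-indexed sup
    have hstep : ∀ ε : ℝ, 0 < ε → (⨅ r ∈ Set.Ioo (0:ℝ) ε, f r) =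
        ⨅ (q : ℚ) (_ : 0 < (q:ℝ) ∧ (q:ℝ) < ε), M (q:ℝ) x / ENNReal.ofReal (q:ℝ) := by
      intro ε hε
      rw [hinf ε hε]
      exact iInf_congr fun q => iInf_congr fun hq => hfM (q:ℝ)
    have hGx : G x = ⨆ k : ℕ, ⨅ r ∈ Set.Ioo (0:ℝ) (1 / (k + 1)), f r := by
      rw [hG]
      exact iSup_congr fun k => (hstep (1 / (k + 1)) (by positivity)).symm
    rw [hGx]
    apply le_antisymm
    · exact iSup_le fun k => le_iSup₂ (f := fun (ε : ℝ) (_ : 0 < ε) => ⨅ r ∈ Set.Ioo (0:ℝ) ε, f r)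
        (1 / (k + 1) : ℝ) (by positivity)
    · refine iSup₂_le fun ε hε => ?_
      obtain ⟨k, hk⟩ := exists_nat_one_div_lt hε
      refine le_trans ?_ (le_iSup _ k)
      exact iInf_le_iInf_of_subset (Set.Ioo_subset_Ioo_right hk.le)

/-- Lemma 4.8: for a continuous `h : [a,b] → Y` with `lip_h < ∞` on a measurable
set `A`, one has `ℋ¹(h(A)) ≤ ∫_A lip_h dt`. -/
theorem hausdorff_image_le_integral_lip
    {Y : Type*} [MetricSpace Y] [MeasurableSpace Y] [BorelSpace Y]
    [TopologicalSpace.SeparableSpace Y]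
    (a b : ℝ) (hab : a < b)
    (h : ℝ → Y) (hcont : ContinuousOn h (Set.Icc a b))
    (A : Set ℝ) (hA : NullMeasurableSet A volume) (hAsub : A ⊆ Set.Icc a b)
    (hliploc : ∀ t ∈ A, elip h (Set.Icc a b) t < ⊤) :
    μH[1] (h '' A) ≤ ∫⁻ t in A, elip h (Set.Icc a b) t := by
  obtain ⟨G, Gmeas, hGeq⟩ := lip_exists_measurable_version a b hab.le h hcont
  -- the integral over A of elip equals that of G
  have hint : (∫⁻ t in A, elip h (Set.Icc a b) t) = ∫⁻ t in A, G t := by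
    apply lintegral_congr_ae
    rw [Filter.eventuallyEq_iff_exists_mem]
    refine ⟨Set.Icc a b, ?_, fun t ht => (hGeq t ht).symm⟩
    rw [mem_ae_iff, Measure.restrict_apply measurableSet_Icc.compl]
    have : (Set.Icc a b)ᶜ ∩ A = ∅ := by
      ext t; simp only [Set.mem_inter_iff, Set.mem_compl_iff, Set.mem_empty_iff_false,
        iff_false, not_and]
      exact fun htc ht => htc (hAsub ht)
    rw [this, measure_empty]
  rw [hint]
  -- main estimate for fixed band width d
  have key : ∀ d : ℝ, 0 < d →
      μH[1] (h '' A) ≤ (∫⁻ t in A, G t) + ENNReal.ofReal d * ENNReal.ofReal (b - a) := by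
    intro d hd
    set band : ℕ → Set ℝ := fun k =>
      G ⁻¹' (Set.Ico (ENNReal.ofReal (k * d)) (ENNReal.ofReal ((k + 1) * d))) with hband
    have hbandmeas : ∀ k, MeasurableSet (band k) := fun k => Gmeas measurableSet_Ico
    have hbanddisj : Pairwise (Function.onFun Disjoint band) := by
      intro k j hkj
      wlog hlt : k < j generalizing k j
      · exact (this hkj.symm (by omega)).symm
      rw [Function.onFun, Set.disjoint_left]
      rintro t ⟨_, h2⟩ ⟨h3, _⟩
      have hle : ENNReal.ofReal (((k:ℝ) + 1) * d) ≤ ENNReal.ofReal ((j:ℝ) * d) := by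
        apply ENNReal.ofReal_le_ofReal
        have hkj' : ((k:ℝ) + 1) ≤ (j:ℝ) := by exact_mod_cast hlt
        nlinarith
      exact absurd h3 (not_le.2 (lt_of_lt_of_le h2 hle))
    have hcover : A ⊆ ⋃ k : ℕ, A ∩ band k := by
      intro t ht
      have hfin : G t ≠ ⊤ := by
        rw [hGeq t (hAsub ht)]
        exact (hliploc t ht).ne
      set x := (G t).toReal with hx
      have hx0 : 0 ≤ x := ENNReal.toReal_nonneg
      set k := ⌊x / d⌋₊ with hk
      refine Set.mem_iUnion.2 ⟨k, ht, ?_, ?_⟩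
      · have h1 : (k:ℝ) ≤ x / d := Nat.floor_le (by positivity)
        have h2 : (k:ℝ) * d ≤ x := by
          rw [← le_div_iff₀ hd]; exact h1
        calc ENNReal.ofReal ((k:ℝ) * d) ≤ ENNReal.ofReal x := ENNReal.ofReal_le_ofReal h2
          _ = G t := ENNReal.ofReal_toReal hfin
      · have h1 : x / d < (k:ℝ) + 1 := Nat.lt_floor_add_one _
        have h2 : x < ((k:ℝ) + 1) * d := by
          rw [← div_lt_iff₀ hd]; exact h1
        calc G t = ENNReal.ofReal x := (ENNReal.ofReal_toReal hfin).symm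
          _ < ENNReal.ofReal (((k:ℝ) + 1) * d) := by
              rw [ENNReal.ofReal_lt_ofReal_iff (by positivity)]; exact h2
    -- Hausdorff measure bound on each band
    have hbandbound : ∀ k : ℕ, μH[1] (h '' (A ∩ band k)) ≤
        ENNReal.ofReal (((k:ℝ) + 1) * d) * volume (A ∩ band k) := by
      intro k
      apply lip_core_estimate a b h _ ENNReal.ofReal_ne_top _ (fun t ht => hAsub ht.1)
      intro t ht
      rw [← hGeq t (hAsub ht.1)]
      exact ht.2.2
    have himg : μH[1] (h '' A) ≤ ∑' k : ℕ, μH[1] (h '' (A ∩ band k)) := by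
      calc μH[1] (h '' A) ≤ μH[1] (⋃ k : ℕ, h '' (A ∩ band k)) := by
            apply measure_mono
            rw [← Set.image_iUnion]
            exact Set.image_mono hcover
        _ ≤ ∑' k : ℕ, μH[1] (h '' (A ∩ band k)) := measure_iUnion_le _
    -- the sums
    set μA := volume.restrict A with hμA
    have hvol : ∀ k, volume (A ∩ band k) = μA (band k) := by
      intro k
      rw [hμA, Measure.restrict_apply (hbandmeas k), Set.inter_comm]
    have hsum1 : (∑' k : ℕ, ENNReal.ofReal ((k:ℝ) * d) * μA (band k)) ≤ ∫⁻ t in A, G t := by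
      have hψ : ∀ t : ℝ, (∑' k : ℕ, (band k).indicator
          (fun _ => ENNReal.ofReal ((k:ℝ) * d)) t) ≤ G t := by
        intro t
        by_cases ht : ∃ k, t ∈ band k
        · obtain ⟨k, hk⟩ := ht
          have huniq : ∀ j : ℕ, j ≠ k → (band j).indicator
              (fun _ => ENNReal.ofReal ((j:ℝ) * d)) t = 0 := by
            intro j hj
            apply Set.indicator_of_notMem
            exact fun hmem => (hbanddisj hj).ne_of_mem hmem hk rfl
          rw [tsum_eq_single k huniq, Set.indicator_of_mem hk]
          exact hk.1
        · push_neg at ht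
          have : ∀ k : ℕ, (band k).indicator (fun _ => ENNReal.ofReal ((k:ℝ) * d)) t = 0 :=
            fun k => Set.indicator_of_notMem (ht k) _
          rw [tsum_congr this, tsum_zero]
          exact zero_le
      calc (∑' k : ℕ, ENNReal.ofReal ((k:ℝ) * d) * μA (band k))
          = ∫⁻ t, (∑' k : ℕ, (band k).indicator
              (fun _ => ENNReal.ofReal ((k:ℝ) * d)) t) ∂μA := by
            rw [lintegral_tsum fun k => ((measurable_const.indicator
              (hbandmeas k)).aemeasurable)]
            congr 1
            ext k
            rw [lintegral_indicator_const (hbandmeas k)]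
        _ ≤ ∫⁻ t, G t ∂μA := lintegral_mono hψ
    have hsum2 : (∑' k : ℕ, μA (band k)) ≤ ENNReal.ofReal (b - a) := by
      calc (∑' k : ℕ, μA (band k)) = μA (⋃ k, band k) :=
            (measure_iUnion hbanddisj hbandmeas).symm
        _ ≤ μA Set.univ := measure_mono (Set.subset_univ _)
        _ = volume A := by rw [hμA, Measure.restrict_apply_univ]
        _ ≤ volume (Set.Icc a b) := measure_mono hAsub
        _ = ENNReal.ofReal (b - a) := Real.volume_Icc
    calc μH[1] (h '' A) ≤ ∑' k : ℕ, μH[1] (h '' (A ∩ band k)) := himg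
      _ ≤ ∑' k : ℕ, ENNReal.ofReal (((k:ℝ) + 1) * d) * μA (band k) := by
          refine ENNReal.tsum_le_tsum fun k => ?_
          rw [← hvol k]
          exact_mod_cast hbandbound k
      _ = (∑' k : ℕ, ENNReal.ofReal ((k:ℝ) * d) * μA (band k)) +
            ∑' k : ℕ, ENNReal.ofReal d * μA (band k) := by
          rw [← ENNReal.tsum_add]
          congr 1
          ext k
          rw [← add_mul, ← ENNReal.ofReal_add (by positivity) hd.le]
          ring_nf
      _ ≤ (∫⁻ t in A, G t) + ENNReal.ofReal d * ENNReal.ofReal (b - a) :=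
          add_le_add hsum1 (by rw [ENNReal.tsum_mul_left]; exact mul_le_mul_right hsum2 _)
  -- let d → 0
  have hlim : Tendsto (fun n : ℕ =>
      (∫⁻ t in A, G t) + ENNReal.ofReal (1 / (n + 1)) * ENNReal.ofReal (b - a)) atTop
      (nhds ((∫⁻ t in A, G t) + 0)) := by
    apply Tendsto.const_add
    have h0 : Tendsto (fun n : ℕ => ENNReal.ofReal (1 / ((n:ℝ) + 1))) atTop (nhds 0) := by
      rw [← ENNReal.ofReal_zero]
      exact (ENNReal.continuous_ofReal.tendsto 0).comp tendsto_one_div_add_atTop_nhds_zero_nat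
    have := ENNReal.Tendsto.mul_const (b := ENNReal.ofReal (b - a)) h0
      (Or.inr ENNReal.ofReal_ne_top)
    simpa using this
  rw [← add_zero (∫⁻ t in A, G t)]
  exact ge_of_tendsto hlim (Filter.Eventually.of_forall fun n => key (1 / (n + 1)) (by positivity))
end
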